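/- arXiv:1604.03153 — 3 statements merged into one kernel-verified Lean document; each statement's English description precedes it below -/
import Mathlib

section
/- Let N ∈ ℕ and p_1,...,p_N ∈ (0,1) with (1/N)∑_{i=1}^N p_i = 1/2. Define θ = (∑_{j=1}^N ∑_{i=1}^j (1-p_j)(2p_i-1)) / (2∑_{j=1}^N p_j(1-p_j)) and θ̃ = (∑_{j=1}^N ∑_{i=1}^j p_j(1-2p_i)) / (2∑_{j=1}^N p_j(1-p_j)). Then θ + θ̃ = 1 - N/(4∑_{j=1}^N p_j(1-p_j)). -/
/-!
Put `a i = 2 p i - 1`. Termwise, `(1 - p j) a i + p j (-a i) = -a j a i`, so the two numerators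
add up to `-∑_{i ≤ j} a j a i = -((∑ a)² + ∑ a²) / 2`. The mean condition says `∑ a = 0`, and
`a² = 1 - 4 p (1 - p)`, so the sum of the numerators is `(4 D - N) / 2` with `D = ∑ p (1 - p)`.
-/

open Finset

theorem two_mul_sum_mul_sum_Icc {R : Type*} [CommRing R] (N : ℕ) (a : ℕ → R) :
    2 * ∑ j ∈ Icc 1 N, a j * ∑ i ∈ Icc 1 j, a i =
      (∑ j ∈ Icc 1 N, a j) ^ 2 + ∑ j ∈ Icc 1 N, a j ^ 2 := by
  induction N with
  | zero => simp
  | succ n ih =>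
    simp only [sum_Icc_succ_top (Nat.le_add_left 1 n)]
    linear_combination ih

theorem sum_Icc_one_sub_mul_add_mul_one_sub {R : Type*} [CommRing R] (N : ℕ) (p : ℕ → R) :
    (∑ j ∈ Icc 1 N, ∑ i ∈ Icc 1 j, (1 - p j) * (2 * p i - 1)) +
        ∑ j ∈ Icc 1 N, ∑ i ∈ Icc 1 j, p j * (1 - 2 * p i) =
      -∑ j ∈ Icc 1 N, (2 * p j - 1) * ∑ i ∈ Icc 1 j, (2 * p i - 1) := by
  simp only [← sum_add_distrib, mul_sum, ← sum_neg_distrib]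
  exact sum_congr rfl fun j _ => sum_congr rfl fun i _ => by ring

theorem sum_two_mul_sub_one_sq {ι R : Type*} [CommRing R] (s : Finset ι) (p : ι → R) :
    ∑ j ∈ s, (2 * p j - 1) ^ 2 = #s - 4 * ∑ j ∈ s, p j * (1 - p j) := by
  calc ∑ j ∈ s, (2 * p j - 1) ^ 2 = ∑ j ∈ s, (1 - 4 * (p j * (1 - p j))) :=
        sum_congr rfl fun j _ => by ring
    _ = #s - 4 * ∑ j ∈ s, p j * (1 - p j) := by simp [sum_sub_distrib, mul_sum]

theorem theta_plus_thetaTilde_general (N : ℕ) (p : ℕ → ℝ)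
    (hp : ∀ i ∈ Icc 1 N, 0 < p i ∧ p i < 1)
    (hmean : (1 / N : ℝ) * ∑ i ∈ Icc 1 N, p i = 1 / 2) :
    (∑ j ∈ Icc 1 N, ∑ i ∈ Icc 1 j, (1 - p j) * (2 * p i - 1)) /
        (2 * ∑ j ∈ Icc 1 N, p j * (1 - p j)) +
      (∑ j ∈ Icc 1 N, ∑ i ∈ Icc 1 j, p j * (1 - 2 * p i)) /
        (2 * ∑ j ∈ Icc 1 N, p j * (1 - p j)) =
      1 - (N : ℝ) / (4 * ∑ j ∈ Icc 1 N, p j * (1 - p j)) := by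
  have hN : N ≠ 0 := by rintro rfl; simp at hmean
  have hD : 0 < ∑ j ∈ Icc 1 N, p j * (1 - p j) :=
    sum_pos (fun i hi => mul_pos (hp i hi).1 (sub_pos.2 (hp i hi).2))
      (nonempty_Icc.2 (Nat.one_le_iff_ne_zero.2 hN))
  have hsum : ∑ j ∈ Icc 1 N, (2 * p j - 1) = 0 := by
    field_simp at hmean
    simp only [sum_sub_distrib, ← mul_sum, sum_const, Nat.card_Icc, add_tsub_cancel_right,
      nsmul_eq_mul, mul_one]
    linarith
  have htri : 2 * ∑ j ∈ Icc 1 N, (2 * p j - 1) * ∑ i ∈ Icc 1 j, (2 * p i - 1) =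
      N - 4 * ∑ j ∈ Icc 1 N, p j * (1 - p j) := by
    rw [two_mul_sum_mul_sum_Icc, hsum, sum_two_mul_sub_one_sq, Nat.card_Icc, add_tsub_cancel_right]
    ring
  rw [← add_div, sum_Icc_one_sub_mul_add_mul_one_sub]
  field_simp
  linear_combination -2 * htri

theorem theta_plus_thetaTilde (N : ℕ) (hN : 0 < N) (p : ℕ → ℝ)
    (hp : ∀ i ∈ Icc 1 N, 0 < p i ∧ p i < 1)
    (hmean : (1 / N : ℝ) * ∑ i ∈ Icc 1 N, p i = 1 / 2) :
    (∑ j ∈ Icc 1 N, ∑ i ∈ Icc 1 j, (1 - p j) * (2 * p i - 1)) /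
        (2 * ∑ j ∈ Icc 1 N, p j * (1 - p j)) +
      (∑ j ∈ Icc 1 N, ∑ i ∈ Icc 1 j, p j * (1 - 2 * p i)) /
        (2 * ∑ j ∈ Icc 1 N, p j * (1 - p j)) =
      1 - (N : ℝ) / (4 * ∑ j ∈ Icc 1 N, p j * (1 - p j)) :=
  theta_plus_thetaTilde_general N p hp hmean
end

section
/- Let (X_n) be a nearest-neighbor walk on ℤ started at 0, λ_{x,m} the time of the (m+1)-st visit to x, L(n;y) = #{k < n : X_k = y} the site local time, and E^{(x,m)}_y, D^{(x,m)}_y the directed edge local times as above. Then L(λ_{x,m}; y) = D^{(x,m)}_y + E^{(x,m)}_y for all y, and moreover L(λ_{x,m}; x) = m, L(λ_{x,m}; y) = D^{(x,m)}_y + D^{(x,m)}_{y+1} + 1{0 ≤ y < x} for y < x, and L(λ_{x,m}; y) = E^{(x,m)}_{y-1} + E^{(x,m)}_y + 1{x < y ≤ 0} for y > x. -/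
/-!
Each visit to a site `y` is followed by exactly one step, to `y - 1` or to `y + 1`, so the
local time at `y` splits into the two directed edge local times. Along the edge `{z, z + 1}`
up- and down-crossings alternate, so their numbers differ by at most one, and which of them is
larger is decided by the sides of the edge on which the path starts and ends. For a path from
`0` to `x`, this extra crossing is present exactly for the edges strictly between `0` and `x`.
-/

lemma Int.eq_add_one_or_eq_sub_one_of_abs_sub_eq_one {a b : ℤ} (h : |b - a| = 1) :
    b = a + 1 ∨ b = a - 1 := by
  rcases abs_eq zero_le_one |>.mp h with h | h <;> omega

namespace NearestNeighborPath

def localTime (X : ℕ → ℤ) (n : ℕ) (y : ℤ) : ℕ :=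
  Nat.count (fun k => X k = y) n

def upCrossings (X : ℕ → ℤ) (n : ℕ) (y : ℤ) : ℕ :=
  Nat.count (fun k => X k = y ∧ X (k + 1) = y + 1) n

def downCrossings (X : ℕ → ℤ) (n : ℕ) (y : ℤ) : ℕ :=
  Nat.count (fun k => X k = y ∧ X (k + 1) = y - 1) n

variable {X : ℕ → ℤ} (hX : ∀ k, |X (k + 1) - X k| = 1)
include hX

theorem localTime_eq_downCrossings_add_upCrossings (n : ℕ) (y : ℤ) :
    localTime X n y = downCrossings X n y + upCrossings X n y := by
  induction n with
  | zero => rfl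
  | succ n ih =>
    simp only [localTime, downCrossings, upCrossings, Nat.count_succ] at ih ⊢
    rcases Int.eq_add_one_or_eq_sub_one_of_abs_sub_eq_one (hX n) with h | h <;>
      split_ifs <;> omega

theorem upCrossings_add_ite_eq_downCrossings_add_ite (n : ℕ) (z : ℤ) :
    upCrossings X n z + (if z < X 0 then 1 else 0)
      = downCrossings X n (z + 1) + (if z < X n then 1 else 0) := by
  induction n with
  | zero => rfl
  | succ n ih =>
    simp only [upCrossings, downCrossings, Nat.count_succ, add_sub_cancel_right] at ih ⊢
    rcases Int.eq_add_one_or_eq_sub_one_of_abs_sub_eq_one (hX n) with h | h <;>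
      split_ifs at ih ⊢ <;> omega

end NearestNeighborPath

open NearestNeighborPath in
theorem site_local_time_from_edge_local_times
    (X : ℕ → ℤ) (hX0 : X 0 = 0)
    (hnn : ∀ k : ℕ, |X (k + 1) - X k| = 1)
    (x : ℤ) (m n : ℕ)
    (hend : X n = x)
    (hcount : ((Finset.range n).filter (fun k => X k = x)).card = m)
    (L : ℤ → ℕ) (E D : ℤ → ℕ)
    (hL : ∀ y : ℤ, L y = ((Finset.range n).filter (fun k => X k = y)).card)
    (hE : ∀ y : ℤ, E y = ((Finset.range n).filter (fun k => X k = y ∧ X (k + 1) = y + 1)).card)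
    (hD : ∀ y : ℤ, D y = ((Finset.range n).filter (fun k => X k = y ∧ X (k + 1) = y - 1)).card) :
    (∀ y : ℤ, L y = D y + E y) ∧
      L x = m ∧
      (∀ y : ℤ, y < x → L y = D y + D (y + 1) + (if 0 ≤ y ∧ y < x then 1 else 0)) ∧
      (∀ y : ℤ, x < y → L y = E (y - 1) + E y + (if x < y ∧ y ≤ 0 then 1 else 0)) := by
  obtain rfl : L = localTime X n := funext fun y =>
    (hL y).trans (Nat.count_eq_card_filter_range _ _).symm
  obtain rfl : E = upCrossings X n := funext fun y =>
    (hE y).trans (Nat.count_eq_card_filter_range _ _).symm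
  obtain rfl : D = downCrossings X n := funext fun y =>
    (hD y).trans (Nat.count_eq_card_filter_range _ _).symm
  have hsplit := localTime_eq_downCrossings_add_upCrossings hnn n
  have hcross (z : ℤ) := hX0 ▸ hend ▸ upCrossings_add_ite_eq_downCrossings_add_ite hnn n z
  refine ⟨hsplit, (hL x).trans hcount, fun y hy => ?_, fun y hy => ?_⟩
  · have := hcross y
    rw [hsplit]
    split_ifs at this ⊢ <;> omega
  · have := hcross (y - 1)
    rw [sub_add_cancel] at this
    rw [hsplit]
    split_ifs at this ⊢ <;> omega
end

section
/- Suppose a continuous process Z satisfies Z_0 = 0 and Z_t = B_t + α sup_{s≤t} Z_s + β inf_{s≤t} Z_s for all t > 0, where B is a continuous function with B_0 = 0 and α, β < 1. Then for every t, sup_{s≤t} Z_s ≤ (1-α)^{-1} sup_{s≤t} |B_s| + |β|(1-α)^{-1} |inf_{s≤t} Z_s|, and if additionally α, β ≥ 0 then sup_{s≤t}|Z_s| ≤ (1 - max(α,β))^{-1} sup_{s≤t}|B_s|. -/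
/-!
Let `u ≤ t` be a time at which `Z` attains its maximum `M` over `[0, t]`. The running maximum
at `u` is then `Z u = M` itself, so for `u > 0` the equation at `u` reads
`(1 - α) M = B u + β inf_{[0,u]} Z` with `inf_{[0,t]} Z ≤ inf_{[0,u]} Z ≤ 0`,
which bounds `M`. The minimum is bounded by the same argument applied to `-Z`, which solves the
equation driven by `-B` with `α` and `β` interchanged.
-/

open Set

section RunningExtrema

theorem IsMaxOn.csSup_image_eq {γ β : Type*} [ConditionallyCompleteLattice β] {s : Set γ}
    {g : γ → β} {c : γ} (hc : c ∈ s) (h : IsMaxOn g s c) : sSup (g '' s) = g c :=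
  IsGreatest.csSup_eq ⟨mem_image_of_mem g hc, by rintro _ ⟨y, hy, rfl⟩; exact h hy⟩

variable {α β : Type*} [Preorder α] [TopologicalSpace α] [CompactIccSpace α]
  [ConditionallyCompleteLinearOrder β] [TopologicalSpace β] {f : α → β} {a b x : α}

theorem le_csSup_image_Icc [ClosedIciTopology β] (hf : ContinuousOn f (Icc a b))
    (hx : x ∈ Icc a b) : f x ≤ sSup (f '' Icc a b) :=
  le_csSup (isCompact_Icc.image_of_continuousOn hf).bddAbove (mem_image_of_mem f hx)

theorem csInf_image_Icc_le [ClosedIicTopology β] (hf : ContinuousOn f (Icc a b))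
    (hx : x ∈ Icc a b) : sInf (f '' Icc a b) ≤ f x :=
  csInf_le (isCompact_Icc.image_of_continuousOn hf).bddBelow (mem_image_of_mem f hx)

theorem csInf_image_Icc_le_csInf_image_Icc [ClosedIicTopology β] {c : α}
    (hf : ContinuousOn f (Icc a b)) (hac : a ≤ c) (hcb : c ≤ b) :
    sInf (f '' Icc a b) ≤ sInf (f '' Icc a c) :=
  csInf_le_csInf (isCompact_Icc.image_of_continuousOn hf).bddBelow
    ((nonempty_Icc.2 hac).image f) (image_mono (Icc_subset_Icc_right hcb))

theorem exists_mem_Icc_csSup_image_Icc_eq [ClosedIciTopology β] (hab : a ≤ b)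
    (hf : ContinuousOn f (Icc a b)) :
    ∃ u ∈ Icc a b, sSup (f '' Icc a b) = f u ∧ sSup (f '' Icc a u) = f u := by
  obtain ⟨u, hu, hmax⟩ := isCompact_Icc.exists_isMaxOn (nonempty_Icc.2 hab) hf
  exact ⟨u, hu, hmax.csSup_image_eq hu,
    (hmax.on_subset (Icc_subset_Icc_right hu.2)).csSup_image_eq ⟨hu.1, le_rfl⟩⟩

end RunningExtrema

def SolvesPerturbedEquation (Z B : ℝ → ℝ) (α β : ℝ) : Prop :=
  ∀ t : ℝ, 0 < t → Z t = B t + α * sSup (Z '' Icc 0 t) + β * sInf (Z '' Icc 0 t)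

theorem image_neg_fun_eq_neg {γ β : Type*} [InvolutiveNeg β] (f : γ → β) (s : Set γ) :
    (-f) '' s = -(f '' s) := by
  rw [← image_neg_eq_neg, image_image]; rfl

namespace SolvesPerturbedEquation

variable {Z B : ℝ → ℝ} {α β t : ℝ}

theorem neg (h : SolvesPerturbedEquation Z B α β) : SolvesPerturbedEquation (-Z) (-B) β α := by
  intro t ht
  rw [image_neg_fun_eq_neg, Real.sSup_neg, Real.sInf_neg, Pi.neg_apply, Pi.neg_apply, h t ht]
  ring

theorem exists_one_sub_mul_csSup_le (h : SolvesPerturbedEquation Z B α β) (hZ : Continuous Z)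
    (hZ0 : Z 0 = 0) (ht : 0 ≤ t) :
    ∃ u ∈ Icc 0 t, ∃ m ∈ Icc (sInf (Z '' Icc 0 t)) 0,
      (1 - α) * sSup (Z '' Icc 0 t) ≤ |B u| + β * m := by
  obtain ⟨u, hu, hMt, hMu⟩ := exists_mem_Icc_csSup_image_Icc_eq ht hZ.continuousOn
  have h0u : (0 : ℝ) ∈ Icc 0 u := ⟨le_rfl, hu.1⟩
  refine ⟨u, hu, sInf (Z '' Icc 0 u),
    ⟨csInf_image_Icc_le_csInf_image_Icc hZ.continuousOn hu.1 hu.2,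
      (csInf_image_Icc_le hZ.continuousOn h0u).trans_eq hZ0⟩, ?_⟩
  rcases hu.1.eq_or_lt with rfl | hu0
  · simp [hMt, hZ0]
  · have hZu := h u hu0
    rw [hMu] at hZu
    rw [hMt]
    linarith [le_abs_self (B u)]

theorem one_sub_mul_csSup_le (h : SolvesPerturbedEquation Z B α β) (hZ : Continuous Z)
    (hB : Continuous B) (hZ0 : Z 0 = 0) (ht : 0 ≤ t) :
    (1 - α) * sSup (Z '' Icc 0 t) ≤
      sSup ((fun s => |B s|) '' Icc 0 t) + |β| * |sInf (Z '' Icc 0 t)| := by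
  obtain ⟨u, hu, m, ⟨hm, hm0⟩, hle⟩ := h.exists_one_sub_mul_csSup_le hZ hZ0 ht
  have hBu := le_csSup_image_Icc hB.abs.continuousOn hu
  have hβm : β * m ≤ |β| * |sInf (Z '' Icc 0 t)| :=
    calc β * m ≤ |β| * |m| := (le_abs_self _).trans_eq (abs_mul _ _)
      _ ≤ |β| * |sInf (Z '' Icc 0 t)| :=
        mul_le_mul_of_nonneg_left (abs_le_abs_of_nonpos hm0 hm) (abs_nonneg β)
  linarith

theorem one_sub_max_mul_csSup_le (h : SolvesPerturbedEquation Z B α β) (hZ : Continuous Z)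
    (hB : Continuous B) (hZ0 : Z 0 = 0) (hβ : 0 ≤ β) (ht : 0 ≤ t) :
    (1 - max α β) * sSup (Z '' Icc 0 t) ≤ sSup ((fun s => |B s|) '' Icc 0 t) := by
  obtain ⟨u, hu, m, ⟨-, hm0⟩, hle⟩ := h.exists_one_sub_mul_csSup_le hZ hZ0 ht
  have hM : 0 ≤ sSup (Z '' Icc 0 t) :=
    hZ0.symm.le.trans (le_csSup_image_Icc hZ.continuousOn ⟨le_rfl, ht⟩)
  calc (1 - max α β) * sSup (Z '' Icc 0 t) ≤ (1 - α) * sSup (Z '' Icc 0 t) :=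
        mul_le_mul_of_nonneg_right (by linarith [le_max_left α β]) hM
    _ ≤ |B u| + β * m := hle
    _ ≤ |B u| := add_le_of_nonpos_right (mul_nonpos_of_nonneg_of_nonpos hβ hm0)
    _ ≤ sSup ((fun s => |B s|) '' Icc 0 t) := le_csSup_image_Icc hB.abs.continuousOn hu

theorem one_sub_max_mul_neg_csInf_le (h : SolvesPerturbedEquation Z B α β) (hZ : Continuous Z)
    (hB : Continuous B) (hZ0 : Z 0 = 0) (hα : 0 ≤ α) (ht : 0 ≤ t) :
    (1 - max α β) * -sInf (Z '' Icc 0 t) ≤ sSup ((fun s => |B s|) '' Icc 0 t) := by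
  have := h.neg.one_sub_max_mul_csSup_le hZ.neg hB.neg (by simp [hZ0]) hα ht
  rw [max_comm, image_neg_fun_eq_neg, Real.sSup_neg] at this
  simpa only [Pi.neg_apply, abs_neg] using this

end SolvesPerturbedEquation

theorem perturbed_bm_apriori_bound_general
    (Z B : ℝ → ℝ) (hZcont : Continuous Z) (hBcont : Continuous B)
    (hZ0 : Z 0 = 0)
    (α β : ℝ) (hα : α < 1) (hβ : β < 1)
    (heq : ∀ t : ℝ, 0 < t →
      Z t = B t + α * sSup (Z '' Icc 0 t) + β * sInf (Z '' Icc 0 t)) :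
    ∀ t : ℝ, 0 ≤ t →
      (sSup (Z '' Icc 0 t) ≤
          (1 - α)⁻¹ * sSup ((fun s => |B s|) '' Icc 0 t) +
            |β| * (1 - α)⁻¹ * |sInf (Z '' Icc 0 t)|) ∧
        (0 ≤ α → 0 ≤ β →
          sSup ((fun s => |Z s|) '' Icc 0 t) ≤
            (1 - max α β)⁻¹ * sSup ((fun s => |B s|) '' Icc 0 t)) := by
  have hsol : SolvesPerturbedEquation Z B α β := heq
  intro t ht
  refine ⟨?_, fun hα0 hβ0 => ?_⟩
  · calc sSup (Z '' Icc 0 t)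
        ≤ (1 - α)⁻¹ * (sSup ((fun s => |B s|) '' Icc 0 t) + |β| * |sInf (Z '' Icc 0 t)|) :=
          (le_inv_mul_iff₀ (sub_pos.2 hα)).2 (hsol.one_sub_mul_csSup_le hZcont hBcont hZ0 ht)
      _ = _ := by ring
  · have hγ : 0 < 1 - max α β := sub_pos.2 (max_lt hα hβ)
    have hM := (le_inv_mul_iff₀ hγ).2 (hsol.one_sub_max_mul_csSup_le hZcont hBcont hZ0 hβ0 ht)
    have hm :=
      (le_inv_mul_iff₀ hγ).2 (hsol.one_sub_max_mul_neg_csInf_le hZcont hBcont hZ0 hα0 ht)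
    refine csSup_le ((nonempty_Icc.2 ht).image _) ?_
    rintro _ ⟨s, hs, rfl⟩
    rw [abs_le]
    exact ⟨by linarith [csInf_image_Icc_le hZcont.continuousOn hs],
      by linarith [le_csSup_image_Icc hZcont.continuousOn hs]⟩

/-- A priori bounds for solutions of the perturbed Brownian motion functional equation
`Z_t = B_t + α sup_{s≤t} Z_s + β inf_{s≤t} Z_s` with `α, β < 1`. -/
theorem perturbed_bm_apriori_bound
    (Z B : ℝ → ℝ) (hZcont : Continuous Z) (hBcont : Continuous B)
    (hZ0 : Z 0 = 0) (hB0 : B 0 = 0)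
    (α β : ℝ) (hα : α < 1) (hβ : β < 1)
    (heq : ∀ t : ℝ, 0 < t →
      Z t = B t + α * sSup (Z '' Icc 0 t) + β * sInf (Z '' Icc 0 t)) :
    ∀ t : ℝ, 0 ≤ t →
      (sSup (Z '' Icc 0 t) ≤
          (1 - α)⁻¹ * sSup ((fun s => |B s|) '' Icc 0 t) +
            |β| * (1 - α)⁻¹ * |sInf (Z '' Icc 0 t)|) ∧
        (0 ≤ α → 0 ≤ β →
          sSup ((fun s => |Z s|) '' Icc 0 t) ≤
            (1 - max α β)⁻¹ * sSup ((fun s => |B s|) '' Icc 0 t)) :=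
  perturbed_bm_apriori_bound_general Z B hZcont hBcont hZ0 α β hα hβ heq
end
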